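/- arXiv:1711.01013 — 2 statements merged into one kernel-verified Lean document; each statement's English description precedes it below -/
import Mathlib

section
/- For every subset B ⊂ ℍ and every directed edge e⃗ = x → y with x ∈ B, y ∈ ℍ \ B and |x − y| = 1, the limit H_B(e⃗) = lim_{N→∞} H_{B,N}(e⃗) exists and is finite, where H_{B,N}(e⃗) = Σ_{z ∈ L_N \ B} P_z(S_{τ̄_{B ∪ L_0}} = x and S_{τ̄_{B ∪ L_0} − 1} = y). -/
/-!
Reversing time, a walk from `z ∈ L_N` whose first visit to `B ∪ L₀` is a step `y → x` is a
walk from `y` to `z` that avoids `B ∪ L₀`, followed by that step. Hence `H_{B,N}(x → y)` is a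
quarter of the expected number of visits to `L_N` by the walk from `y` killed on `B ∪ L₀`.
Testing against the functions `min(t, N)⁺` and `𝟙{t > N}` of the height `t`, which are harmonic
off `L₀` up to explicit corrections on `L_N` and `L_{N+1}`, shows that this number is at most
`4 y₂` and does not increase with `N` once `N ≥ y₂`; so the limit exists.
-/

open Filter

namespace SHM

/-- The upper half planar lattice `ℍ = {(x₁,x₂) ∈ ℤ² : x₂ ≥ 0}` (including the x-axis). -/
def upperH : Set (ℤ × ℤ) := {p | 0 ≤ p.2}

/-- The horizontal line `L_n = {(x,n) : x ∈ ℤ}` of height `n`. -/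
def lineH (n : ℤ) : Set (ℤ × ℤ) := {p | p.2 = n}

/-- The four unit steps of the planar simple random walk. -/
def dirs : Finset (ℤ × ℤ) := {(1,0), (-1,0), (0,1), (0,-1)}

/-- The position after `m` steps of the walk started at `z` whose first `n`
increments are given by `σ`. -/
def pos (z : ℤ × ℤ) {n : ℕ} (σ : Fin n → ℤ × ℤ) (m : ℕ) : ℤ × ℤ :=
  z + ∑ i ∈ Finset.univ.filter (fun i : Fin n => (i : ℕ) < m), σ i

/-- The probability that the first `n` increments of the simple random walk
(each uniform on the four unit vectors) satisfy the predicate `E`. -/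
noncomputable def stepProb (n : ℕ) (E : (Fin n → ℤ × ℤ) → Prop) : ℝ :=
  (Nat.card {σ : Fin n → ↥dirs // E fun i => ((σ i : ℤ × ℤ))} : ℝ) / 4 ^ n

/-- `P_z(S_{τ̄_A} = x)` : the walk started at `z` hits `A` (in finite time) for the
first time precisely at the point `x`.  Here `τ̄_A = min {m ≥ 0 : S_m ∈ A}`. -/
noncomputable def hitProb (z : ℤ × ℤ) (A : Set (ℤ × ℤ)) (x : ℤ × ℤ) : ℝ :=
  ∑' n : ℕ, stepProb n fun σ =>
    pos z σ n = x ∧ x ∈ A ∧ ∀ m < n, pos z σ m ∉ A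

/-- `P_z(τ̄_A < τ̄_B)` : the walk started at `z` hits `A` strictly before hitting `B`. -/
noncomputable def hitBeforeProb (z : ℤ × ℤ) (A B : Set (ℤ × ℤ)) : ℝ :=
  ∑' n : ℕ, stepProb n fun σ =>
    pos z σ n ∈ A ∧ pos z σ n ∉ B ∧ ∀ m < n, pos z σ m ∉ A ∧ pos z σ m ∉ B

/-- The stationary harmonic measure `H_{B,N}(x) = Σ_{z ∈ L_N \ B} P_z(S_{τ̄_{B ∪ L₀}} = x)`. -/
noncomputable def harm (B : Set (ℤ × ℤ)) (N : ℕ) (x : ℤ × ℤ) : ℝ :=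
  ∑' z : ↥(lineH (N : ℤ) \ B), hitProb (z : ℤ × ℤ) (B ∪ lineH 0) x

/-- `P_z(S_{τ̄_A} = x, S_{τ̄_A − 1} = y)` : the walk started at `z` hits `A` for the first
time (in finite time, at a positive time) at the point `x`, coming from the point `y`. -/
noncomputable def edgeHitProb (z : ℤ × ℤ) (A : Set (ℤ × ℤ)) (x y : ℤ × ℤ) : ℝ :=
  ∑' n : ℕ, stepProb n fun σ =>
    0 < n ∧ pos z σ n = x ∧ x ∈ A ∧ pos z σ (n - 1) = y ∧ ∀ m < n, pos z σ m ∉ A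

/-- `H_{B,N}(e⃗) = Σ_{z ∈ L_N \ B} P_z(S_{τ̄_{B∪L₀}} = x, S_{τ̄_{B∪L₀}−1} = y)` for the
directed edge `e⃗ = x → y`. -/
noncomputable def harmEdge (B : Set (ℤ × ℤ)) (N : ℕ) (x y : ℤ × ℤ) : ℝ :=
  ∑' z : ↥(lineH (N : ℤ) \ B), edgeHitProb (z : ℤ × ℤ) (B ∪ lineH 0) x y

open scoped ENNReal

lemma sub_mem_dirs {x y : ℤ × ℤ} (hxy : (x.1 - y.1).natAbs + (x.2 - y.2).natAbs = 1) :
    x - y ∈ dirs := by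
  obtain ⟨x₁, x₂⟩ := x
  obtain ⟨y₁, y₂⟩ := y
  have : x₁ - y₁ = 1 ∧ x₂ - y₂ = 0 ∨ x₁ - y₁ = -1 ∧ x₂ - y₂ = 0 ∨
      x₁ - y₁ = 0 ∧ x₂ - y₂ = 1 ∨ x₁ - y₁ = 0 ∧ x₂ - y₂ = -1 := by omega
  simp only [dirs, Finset.mem_insert, Finset.mem_singleton, Prod.mk_sub_mk, Prod.mk.injEq]
  exact this

lemma neg_mem_dirs : ∀ d ∈ dirs, -d ∈ dirs := by
  decide

lemma sum_dirs_snd {M : Type*} [AddCommMonoid M] (φ : ℤ → M) (u : ℤ × ℤ) :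
    ∑ d ∈ dirs, φ (u + d).2 = φ u.2 + φ u.2 + φ (u.2 + 1) + φ (u.2 - 1) := by
  simp [dirs, sub_eq_add_neg, add_assoc]

section Paths

variable (z : ℤ × ℤ) {n : ℕ} (σ : Fin n → ℤ × ℤ)

@[simp]
lemma pos_zero : pos z σ 0 = z := by
  simp [pos]

lemma pos_snoc_of_le (d : ℤ × ℤ) {m : ℕ} (hm : m ≤ n) :
    pos z (Fin.snoc σ d : Fin (n + 1) → ℤ × ℤ) m = pos z σ m := by
  simp only [pos, Finset.sum_filter, Fin.sum_univ_castSucc, Fin.snoc_castSucc, Fin.snoc_last,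
    Fin.val_castSucc, Fin.val_last]
  simp [show ¬n < m by omega]

lemma pos_snoc_succ (d : ℤ × ℤ) :
    pos z (Fin.snoc σ d : Fin (n + 1) → ℤ × ℤ) (n + 1) = pos z σ n + d := by
  simp only [pos, Finset.sum_filter, Fin.sum_univ_castSucc, Fin.snoc_castSucc, Fin.snoc_last,
    Fin.val_castSucc, Fin.val_last]
  simp [Fin.is_lt, add_assoc]

def revSteps : Fin n → ℤ × ℤ := fun i => -σ i.rev

@[simp]
lemma revSteps_revSteps : revSteps (revSteps σ) = σ := by
  ext i <;> simp [revSteps]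

lemma pos_revSteps {m : ℕ} (hm : m ≤ n) :
    pos (pos z σ n) (revSteps σ) m = pos z σ (n - m) := by
  have hrev : ∑ i : Fin n, (if (i : ℕ) < m then revSteps σ i else 0)
      = -∑ i : Fin n, if n - m ≤ (i : ℕ) then σ i else 0 := by
    rw [← Finset.sum_neg_distrib]
    refine Fintype.sum_equiv Fin.revPerm _ _ fun i => ?_
    simp only [revSteps, Fin.revPerm_apply, Fin.val_rev]
    split_ifs <;> first | omega | simp
  have hsplit : ∑ i : Fin n, σ i = ∑ i : Fin n, ((if (i : ℕ) < n - m then σ i else 0)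
      + if n - m ≤ (i : ℕ) then σ i else 0) := by
    refine Finset.sum_congr rfl fun i _ => ?_
    split_ifs <;> first | omega | simp
  simp only [pos, Finset.sum_filter, Fin.is_lt, if_true, hrev]
  rw [hsplit, Finset.sum_add_distrib]
  abel

lemma revSteps_avoid_iff (A : Set (ℤ × ℤ)) (y : ℤ × ℤ) :
    (pos z (revSteps σ) n = y ∧ ∀ m ≤ n, pos z (revSteps σ) m ∉ A) ↔
      (pos y σ n = z ∧ ∀ m ≤ n, pos y σ m ∉ A) := by
  have key : ∀ (y z : ℤ × ℤ) (σ : Fin n → ℤ × ℤ), pos y σ n = z ∧ (∀ m ≤ n, pos y σ m ∉ A) →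
      pos z (revSteps σ) n = y ∧ ∀ m ≤ n, pos z (revSteps σ) m ∉ A := by
    rintro y _ σ ⟨rfl, havoid⟩
    refine ⟨by simp [pos_revSteps _ _ le_rfl], fun m hm => ?_⟩
    rw [pos_revSteps _ _ hm]
    exact havoid _ (Nat.sub_le _ _)
  exact ⟨fun h => by simpa using key z y (revSteps σ) h, key y z σ⟩

end Paths

section StepProb

variable {n : ℕ}

lemma stepProb_nonneg (E : (Fin n → ℤ × ℤ) → Prop) : 0 ≤ stepProb n E := by
  unfold stepProb
  positivity

lemma stepProb_le_one (E : (Fin n → ℤ × ℤ) → Prop) : stepProb n E ≤ 1 := by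
  rw [stepProb, div_le_one (by positivity)]
  have hcard : Nat.card (Fin n → dirs) = 4 ^ n := by
    rw [Nat.card_fun, Nat.card_eq_finsetCard, Nat.card_fin]
    rfl
  exact_mod_cast hcard ▸ Finite.card_subtype_le _

lemma stepProb_eq_zero {E : (Fin n → ℤ × ℤ) → Prop} (h : ∀ σ, ¬E σ) : stepProb n E = 0 := by
  simp [stepProb, h]

lemma stepProb_congr {E F : (Fin n → ℤ × ℤ) → Prop} (h : ∀ σ, E σ ↔ F σ) :
    stepProb n E = stepProb n F := by
  simp only [stepProb, h]

lemma stepProb_succ (E : (Fin (n + 1) → ℤ × ℤ) → Prop) :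
    stepProb (n + 1) E = 4⁻¹ * ∑ d ∈ dirs, stepProb n fun σ => E (Fin.snoc σ d) := by
  let e : {σ : Fin (n + 1) → dirs // E fun i => σ i} ≃
      Σ d : dirs, {τ : Fin n → dirs // E (Fin.snoc (fun i => (τ i : ℤ × ℤ)) d)} :=
    ((Fin.snocEquiv fun _ => dirs).subtypeEquiv
      (p := fun p => E (Fin.snoc (fun i => (p.2 i : ℤ × ℤ)) p.1)) fun p =>
        iff_of_eq (congrArg E (Fin.comp_snoc Subtype.val p.2 p.1)).symm).symm.trans
      (Equiv.subtypeProdEquivSigmaSubtype fun (d : dirs) (τ : Fin n → dirs) =>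
        E (Fin.snoc (fun i => (τ i : ℤ × ℤ)) d))
  rw [stepProb, Nat.card_congr e, Nat.card_sigma, ← Finset.sum_coe_sort dirs, Nat.cast_sum,
    Finset.sum_div, Finset.mul_sum]
  refine Finset.sum_congr rfl fun d _ => ?_
  rw [stepProb, pow_succ]
  ring

lemma stepProb_revSteps (E : (Fin n → ℤ × ℤ) → Prop) :
    stepProb n E = stepProb n fun σ => E (revSteps σ) := by
  let r : (Fin n → dirs) → Fin n → dirs := fun σ i => ⟨-σ i.rev, neg_mem_dirs _ (σ i.rev).2⟩
  have hr : Function.Involutive r := fun σ => by ext i <;> simp [r]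
  have hval (σ : Fin n → dirs) : (fun i => (r σ i : ℤ × ℤ)) = revSteps fun i => σ i := rfl
  unfold stepProb
  congr 2
  exact Nat.card_congr ((hr.toPerm r).subtypeEquiv fun σ => by
    simp only [Function.Involutive.coe_toPerm, hval, revSteps_revSteps])

end StepProb

section Avoiding

variable {A : Set (ℤ × ℤ)} {y : ℤ × ℤ}

variable (A y) in
noncomputable def avoidProb (k : ℕ) (w : ℤ × ℤ) : ℝ≥0∞ :=
  ENNReal.ofReal (stepProb k fun σ => pos y σ k = w ∧ ∀ m ≤ k, pos y σ m ∉ A)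

lemma avoidProb_le_one (k : ℕ) (w : ℤ × ℤ) : avoidProb A y k w ≤ 1 :=
  ENNReal.ofReal_le_one.2 (stepProb_le_one _)

lemma avoidProb_of_mem {w : ℤ × ℤ} (hw : w ∈ A) (k : ℕ) : avoidProb A y k w = 0 := by
  rw [avoidProb, stepProb_eq_zero fun σ h => h.2 k le_rfl (h.1 ▸ hw), ENNReal.ofReal_zero]

lemma avoidProb_zero_of_ne {w : ℤ × ℤ} (hw : w ≠ y) : avoidProb A y 0 w = 0 := by
  rw [avoidProb, stepProb_eq_zero fun σ h => hw (by simpa using h.1.symm), ENNReal.ofReal_zero]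

lemma avoiding_snoc_iff {k : ℕ} {w : ℤ × ℤ} (hw : w ∉ A) (σ : Fin k → ℤ × ℤ) (d : ℤ × ℤ) :
    (pos y (Fin.snoc σ d : Fin (k + 1) → ℤ × ℤ) (k + 1) = w ∧
        ∀ m ≤ k + 1, pos y (Fin.snoc σ d : Fin (k + 1) → ℤ × ℤ) m ∉ A) ↔
      (pos y σ k = w - d ∧ ∀ m ≤ k, pos y σ m ∉ A) := by
  rw [pos_snoc_succ, ← eq_sub_iff_add_eq]
  refine and_congr_right fun hend => ⟨fun h m hm => ?_, fun h m hm => ?_⟩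
  · rw [← pos_snoc_of_le y σ d hm]
    exact h m (Nat.le_succ_of_le hm)
  · rcases Nat.of_le_succ hm with hm | rfl
    · rw [pos_snoc_of_le y σ d hm]
      exact h m hm
    · rwa [pos_snoc_succ, hend, sub_add_cancel]

lemma four_mul_avoidProb_succ {w : ℤ × ℤ} (hw : w ∉ A) (k : ℕ) :
    4 * avoidProb A y (k + 1) w = ∑ d ∈ dirs, avoidProb A y k (w - d) := by
  rw [avoidProb, stepProb_succ, ENNReal.ofReal_mul (by norm_num), ← mul_assoc,
    ENNReal.ofReal_inv_of_pos (by norm_num), ENNReal.ofReal_ofNat,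
    ENNReal.mul_inv_cancel (by norm_num) (by norm_num), one_mul,
    ENNReal.ofReal_sum_of_nonneg fun d _ => stepProb_nonneg _]
  exact Finset.sum_congr rfl fun d _ => by rw [stepProb_congr (avoiding_snoc_iff hw · d), avoidProb]

end Avoiding

section Edge

variable {A : Set (ℤ × ℤ)} {x y : ℤ × ℤ}

lemma stepProb_edge (hx : x ∈ A) (hxy : x - y ∈ dirs) (z : ℤ × ℤ) (k : ℕ) :
    stepProb (k + 1) (fun σ => 0 < k + 1 ∧ pos z σ (k + 1) = x ∧ x ∈ A ∧
        pos z σ (k + 1 - 1) = y ∧ ∀ m < k + 1, pos z σ m ∉ A) =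
      (4⁻¹ * avoidProb A y k z).toReal := by
  have hsnoc (σ : Fin k → ℤ × ℤ) (d : ℤ × ℤ) :
      (0 < k + 1 ∧ pos z (Fin.snoc σ d : Fin (k + 1) → ℤ × ℤ) (k + 1) = x ∧ x ∈ A ∧
        pos z (Fin.snoc σ d : Fin (k + 1) → ℤ × ℤ) (k + 1 - 1) = y ∧
        ∀ m < k + 1, pos z (Fin.snoc σ d : Fin (k + 1) → ℤ × ℤ) m ∉ A) ↔
      d = x - y ∧ pos z σ k = y ∧ ∀ m ≤ k, pos z σ m ∉ A := by
    have hprefix : ∀ m ≤ k, pos z (Fin.snoc σ d : Fin (k + 1) → ℤ × ℤ) m = pos z σ m :=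
      fun m hm => pos_snoc_of_le z σ d hm
    simp only [Nat.add_sub_cancel, Nat.lt_succ_iff, pos_snoc_succ, hprefix k le_rfl]
    constructor
    · rintro ⟨-, hend, -, hprev, havoid⟩
      exact ⟨by rw [← hend, hprev, add_sub_cancel_left], hprev,
        fun m hm => hprefix m hm ▸ havoid m hm⟩
    · rintro ⟨rfl, hprev, havoid⟩
      exact ⟨k.zero_le, by rw [hprev, add_sub_cancel], hx, hprev,
        fun m hm => (hprefix m hm).symm ▸ havoid m hm⟩
  rw [stepProb_succ, Finset.sum_eq_single_of_mem (x - y) hxy fun d _ hd =>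
      stepProb_eq_zero fun σ h => hd ((hsnoc σ d).1 h).1,
    stepProb_congr (hsnoc · (x - y)), stepProb_congr fun σ => and_iff_right rfl,
    stepProb_revSteps, stepProb_congr fun σ => revSteps_avoid_iff z σ A y,
    ENNReal.toReal_mul, avoidProb, ENNReal.toReal_ofReal (stepProb_nonneg _)]
  simp

lemma edgeHitProb_eq (hx : x ∈ A) (hxy : x - y ∈ dirs) (z : ℤ × ℤ) :
    edgeHitProb z A x y = (4⁻¹ * ∑' k, avoidProb A y k z).toReal := by
  have hsupp : Function.support (fun n => stepProb n fun σ => 0 < n ∧ pos z σ n = x ∧ x ∈ A ∧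
      pos z σ (n - 1) = y ∧ ∀ m < n, pos z σ m ∉ A) ⊆ Set.range Nat.succ := by
    rintro (_ | k) hn
    · exact absurd (stepProb_eq_zero fun σ h => lt_irrefl 0 h.1) hn
    · exact ⟨k, rfl⟩
  rw [edgeHitProb, ← Nat.succ_injective.tsum_eq hsupp, ← ENNReal.tsum_mul_left,
    ENNReal.tsum_toReal_eq fun k =>
      ENNReal.mul_ne_top (by simp) (ne_top_of_le_ne_top ENNReal.one_ne_top (avoidProb_le_one k z))]
  exact tsum_congr (stepProb_edge hx hxy z)

end Edge

section Expectation

variable {A : Set (ℤ × ℤ)} {y : ℤ × ℤ}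

variable (A y) in
noncomputable def avoidExpect (k : ℕ) (h : ℤ × ℤ → ℝ≥0∞) : ℝ≥0∞ :=
  ∑' w, avoidProb A y k w * h w

lemma avoidExpect_zero_le (h : ℤ × ℤ → ℝ≥0∞) : avoidExpect A y 0 h ≤ h y := by
  rw [avoidExpect, tsum_eq_single y fun w hw => by rw [avoidProb_zero_of_ne hw, zero_mul]]
  exact mul_le_of_le_one_left' (avoidProb_le_one 0 y)

lemma avoidExpect_add (k : ℕ) (f g : ℤ × ℤ → ℝ≥0∞) :
    avoidExpect A y k (fun w => f w + g w) = avoidExpect A y k f + avoidExpect A y k g := by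
  simp only [avoidExpect, mul_add, ENNReal.tsum_add]

lemma avoidExpect_const_mul (k : ℕ) (c : ℝ≥0∞) (h : ℤ × ℤ → ℝ≥0∞) :
    avoidExpect A y k (fun w => c * h w) = c * avoidExpect A y k h := by
  simp only [avoidExpect, mul_left_comm _ c, ENNReal.tsum_mul_left]

lemma avoidExpect_mono {k : ℕ} {f g : ℤ × ℤ → ℝ≥0∞} (hfg : ∀ w ∉ A, f w ≤ g w) :
    avoidExpect A y k f ≤ avoidExpect A y k g := by
  refine ENNReal.tsum_le_tsum fun w => ?_
  by_cases hw : w ∈ A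
  · simp [avoidProb_of_mem hw]
  · gcongr
    exact hfg w hw

lemma four_mul_avoidExpect_succ_le (k : ℕ) (h : ℤ × ℤ → ℝ≥0∞) :
    4 * avoidExpect A y (k + 1) h ≤ avoidExpect A y k fun u => ∑ d ∈ dirs, h (u + d) := by
  calc 4 * avoidExpect A y (k + 1) h = ∑' w, 4 * avoidProb A y (k + 1) w * h w := by
        simp only [avoidExpect, mul_assoc, ENNReal.tsum_mul_left]
    _ ≤ ∑' w, (∑ d ∈ dirs, avoidProb A y k (w - d)) * h w := ENNReal.tsum_le_tsum fun w => by
        by_cases hw : w ∈ A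
        · simp [avoidProb_of_mem hw]
        · rw [four_mul_avoidProb_succ hw]
    _ = ∑ d ∈ dirs, ∑' u, avoidProb A y k u * h (u + d) := by
        simp only [Finset.sum_mul]
        rw [Summable.tsum_finsetSum fun _ _ => ENNReal.summable]
        refine Finset.sum_congr rfl fun d _ => ?_
        rw [← (Equiv.addRight d).tsum_eq]
        simp only [Equiv.coe_addRight, add_sub_cancel_right]
    _ = avoidExpect A y k fun u => ∑ d ∈ dirs, h (u + d) := by
        simp only [avoidExpect, Finset.mul_sum]
        rw [Summable.tsum_finsetSum fun _ _ => ENNReal.summable]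

variable {f g h : ℤ × ℤ → ℝ≥0∞}

/-- Optional stopping: `h(S_k) + ¼ ∑_{j<k} (f - g)(S_j)` is a supermartingale for the killed
walk. -/
lemma sum_avoidExpect_add_le (hh : ∀ u ∉ A, ∑ d ∈ dirs, h (u + d) + f u ≤ 4 * h u + g u)
    (K : ℕ) :
    ∑ k ∈ Finset.range K, avoidExpect A y k f + 4 * avoidExpect A y K h ≤
      4 * h y + ∑ k ∈ Finset.range K, avoidExpect A y k g := by
  induction K with
  | zero => simpa using mul_le_mul_right (avoidExpect_zero_le h) 4
  | succ K ih =>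
    have hstep : avoidExpect A y K f + 4 * avoidExpect A y (K + 1) h ≤
        4 * avoidExpect A y K h + avoidExpect A y K g :=
      calc _ ≤ avoidExpect A y K (fun u => ∑ d ∈ dirs, h (u + d)) + avoidExpect A y K f := by
            rw [add_comm]
            gcongr
            exact four_mul_avoidExpect_succ_le K h
        _ ≤ avoidExpect A y K fun u => 4 * h u + g u := by
            rw [← avoidExpect_add]
            exact avoidExpect_mono hh
        _ = _ := by rw [avoidExpect_add, avoidExpect_const_mul]
    calc _ = ∑ k ∈ Finset.range K, avoidExpect A y k f +
          (avoidExpect A y K f + 4 * avoidExpect A y (K + 1) h) := by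
          rw [Finset.sum_range_succ, add_assoc]
      _ ≤ ∑ k ∈ Finset.range K, avoidExpect A y k f + 4 * avoidExpect A y K h +
          avoidExpect A y K g := by
          rw [add_assoc]
          gcongr
      _ ≤ _ := by
          rw [Finset.sum_range_succ, ← add_assoc]
          gcongr

lemma tsum_avoidExpect_le (hh : ∀ u ∉ A, ∑ d ∈ dirs, h (u + d) + f u ≤ 4 * h u + g u) :
    ∑' k, avoidExpect A y k f ≤ 4 * h y + ∑' k, avoidExpect A y k g :=
  ENNReal.tsum_le_of_sum_range_le fun K =>
    calc _ ≤ ∑ k ∈ Finset.range K, avoidExpect A y k f + 4 * avoidExpect A y K h := le_self_add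
      _ ≤ _ := sum_avoidExpect_add_le hh K
      _ ≤ _ := by
          gcongr
          exact ENNReal.sum_le_tsum _

lemma tsum_avoidExpect_le_of_height (φ f g : ℤ → ℕ)
    (hφ : ∀ u ∉ A, 2 * φ u.2 + φ (u.2 + 1) + φ (u.2 - 1) + f u.2 ≤ 4 * φ u.2 + g u.2) :
    ∑' k, avoidExpect A y k (fun w => f w.2) ≤
      4 * φ y.2 + ∑' k, avoidExpect A y k fun w => g w.2 :=
  tsum_avoidExpect_le (h := fun w => φ w.2) fun u hu => by
    rw [sum_dirs_snd fun t => (φ t : ℝ≥0∞)]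
    exact_mod_cast (by have := hφ u hu; omega)

end Expectation

section LineGreen

variable {A : Set (ℤ × ℤ)} {y : ℤ × ℤ}

variable (A y) in
/-- The expected number of visits to `L_N` by the walk from `y` before `τ̄_A`. -/
noncomputable def lineGreen (N : ℤ) : ℝ≥0∞ :=
  ∑' k, avoidExpect A y k fun w => if w.2 = N then 1 else 0

/-- `t ↦ min(t, N)⁺` is discrete harmonic in the height off `t = 0`, except on `t = N`, where
the mean over the neighbours falls short by `1/4`. -/
lemma lineGreen_le (hA0 : lineH 0 ⊆ A) {N : ℤ} (hN : 0 ≤ N) :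
    lineGreen A y N ≤ 4 * y.2.toNat := by
  have h := tsum_avoidExpect_le_of_height (y := y) (fun t => (min t N).toNat)
    (fun t => if t = N then 1 else 0) 0 fun u hu => by
      have hu0 : u.2 ≠ 0 := fun h => hu (hA0 h)
      dsimp only [Pi.zero_apply]
      split_ifs <;> omega
  simp only [Nat.cast_ite, Nat.cast_one, Nat.cast_zero, Pi.zero_apply, avoidExpect, mul_zero,
    tsum_zero, add_zero] at h
  refine h.trans ?_
  gcongr
  omega

/-- `𝟙{t > N}` is discrete harmonic in the height, except on `t = N` (mean over the neighbours
`1/4` too big) and on `t = N + 1` (`1/4` too small). -/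
lemma lineGreen_succ_le {N : ℤ} (hyN : y.2 ≤ N) : lineGreen A y (N + 1) ≤ lineGreen A y N := by
  have h := tsum_avoidExpect_le_of_height (A := A) (y := y) (fun t => if N < t then 1 else 0)
    (fun t => if t = N + 1 then 1 else 0) (fun t => if t = N then 1 else 0) fun u _ => by
      split_ifs <;> omega
  simpa [lineGreen, Nat.cast_ite, hyN.not_gt] using h

end LineGreen

lemma tsum_lineH_diff_avoidProb {A B : Set (ℤ × ℤ)} (hBA : B ⊆ A) (y : ℤ × ℤ) (N : ℤ) (k : ℕ) :
    ∑' z : ↥(lineH N \ B), avoidProb A y k z =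
      avoidExpect A y k fun w => if w.2 = N then 1 else 0 := by
  rw [tsum_subtype, avoidExpect]
  refine tsum_congr fun w => ?_
  by_cases hwB : w ∈ B
  · simp [hwB, avoidProb_of_mem (hBA hwB)]
  · by_cases hwN : w.2 = N <;> simp [Set.indicator, lineH, hwB, hwN]

lemma harmEdge_eq {B : Set (ℤ × ℤ)} {x y : ℤ × ℤ} (hx : x ∈ B) (hxy : x - y ∈ dirs) {N : ℕ}
    (hfin : lineGreen (B ∪ lineH 0) y N ≠ ⊤) :
    harmEdge B N x y = (4⁻¹ * lineGreen (B ∪ lineH 0) y N).toReal := by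
  have htotal : ∑' z : ↥(lineH N \ B), 4⁻¹ * ∑' k, avoidProb (B ∪ lineH 0) y k z =
      4⁻¹ * lineGreen (B ∪ lineH 0) y N := by
    rw [ENNReal.tsum_mul_left, ENNReal.tsum_comm, lineGreen]
    simp only [tsum_lineH_diff_avoidProb Set.subset_union_left]
  have hne : ∑' z : ↥(lineH N \ B), 4⁻¹ * ∑' k, avoidProb (B ∪ lineH 0) y k z ≠ ⊤ :=
    htotal ▸ ENNReal.mul_ne_top (by simp) hfin
  rw [harmEdge, ← htotal,
    ENNReal.tsum_toReal_eq fun z => ne_top_of_le_ne_top hne (ENNReal.le_tsum z)]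
  exact tsum_congr fun z => edgeHitProb_eq (Or.inl hx) hxy z

theorem harmEdge_tendsto_general (B : Set (ℤ × ℤ))
    (x y : ℤ × ℤ) (hx : x ∈ B)
    (hxy : (x.1 - y.1).natAbs + (x.2 - y.2).natAbs = 1) :
    ∃ l : ℝ, Tendsto (fun N : ℕ => harmEdge B N x y) atTop (nhds l) := by
  have hfin (N : ℕ) : lineGreen (B ∪ lineH 0) y N ≠ ⊤ :=
    ne_top_of_le_ne_top (ENNReal.mul_ne_top (by simp) (by simp))
      (lineGreen_le Set.subset_union_right N.cast_nonneg)
  have harm (N : ℕ) := harmEdge_eq hx (sub_mem_dirs hxy) (hfin N)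
  have hanti : Antitone fun M : ℕ => harmEdge B (M + y.2.toNat) x y := by
    refine antitone_nat_of_succ_le fun M => ?_
    rw [harm, harm, add_right_comm, Nat.cast_succ]
    exact ENNReal.toReal_mono (ENNReal.mul_ne_top (by simp) (hfin _))
      (mul_le_mul_right (lineGreen_succ_le (by omega)) _)
  have hbdd : BddBelow (Set.range fun M : ℕ => harmEdge B (M + y.2.toNat) x y) :=
    ⟨0, Set.forall_mem_range.2 fun M => (harm _).ge.trans' ENNReal.toReal_nonneg⟩
  exact ⟨_, (tendsto_add_atTop_iff_nat _).mp (tendsto_atTop_ciInf hanti hbdd)⟩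

/-- **Proposition 1.** For every `B ⊂ ℍ` and every directed edge `e⃗ = x → y` with `x ∈ B`,
`y ∈ ℍ \ B` and `|x − y| = 1`, the limit `H_B(e⃗) = lim_{N→∞} H_{B,N}(e⃗)` exists and
is finite. -/
theorem harmEdge_tendsto (B : Set (ℤ × ℤ)) (hB : B ⊆ upperH)
    (x y : ℤ × ℤ) (hx : x ∈ B) (hy : y ∈ upperH \ B)
    (hxy : (x.1 - y.1).natAbs + (x.2 - y.2).natAbs = 1) :
    ∃ l : ℝ, Tendsto (fun N : ℕ => harmEdge B N x y) atTop (nhds l) :=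
  harmEdge_tendsto_general B x y hx hxy

end SHM
end

section
/- Let α > 1, β = 4/(α+3), γ = 2(α−1)/(α+3), and let k be a positive integer such that α·2^{(β(α−1)−γ)k} > 1 and ⌈2^{βk}⌉^α > 2^{(1+γ)k+1}. Then for every y₁ ∈ ℤ with |y₁| ≤ 2^{(1+γ)k+1} and every x = (x₁, x₂) ∈ ℍ satisfying x₂ − ⌈2^{βk}⌉ ≥ |x₁ − y₁| · 2^{−γk}, one has x₂^α > |x₁|. -/
/-- The upper half planar lattice `ℍ = {(x₁,x₂) ∈ ℤ² : x₂ ≥ 0}` (including the x-axis). -/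
def upperH : Set (ℤ × ℤ) := {p | 0 ≤ p.2}

/-- **The translated linear wedges are contained in the super-polynomial region.**
Let `α > 1`, `β = 4/(α+3)`, `γ = 2(α−1)/(α+3)`, and let `k ≥ 1` be an integer with
`α·2^{(β(α−1)−γ)k} > 1` and `⌈2^{βk}⌉^α > 2^{(1+γ)k+1}`.  Then for every `y₁ ∈ ℤ` with
`|y₁| ≤ 2^{(1+γ)k+1}` and every `x = (x₁,x₂) ∈ ℍ` with
`x₂ − ⌈2^{βk}⌉ ≥ |x₁ − y₁|·2^{−γk}`, one has `x₂^α > |x₁|`. -/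
theorem wedge_subset_region (α β γ : ℝ) (hα : 1 < α)
    (hβ : β = 4 / (α + 3)) (hγ : γ = 2 * (α - 1) / (α + 3))
    (k : ℕ) (hk : 0 < k)
    (h1 : 1 < α * (2 : ℝ) ^ ((β * (α - 1) - γ) * k))
    (h2 : (2 : ℝ) ^ ((1 + γ) * k + 1) < ((⌈(2 : ℝ) ^ (β * k)⌉ : ℝ)) ^ α)
    (y₁ : ℤ) (hy : |(y₁ : ℝ)| ≤ (2 : ℝ) ^ ((1 + γ) * k + 1))
    (x : ℤ × ℤ) (hxH : x ∈ upperH)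
    (hxW : |(x.1 : ℝ) - (y₁ : ℝ)| * (2 : ℝ) ^ (-(γ * k)) ≤ (x.2 : ℝ) - (⌈(2 : ℝ) ^ (β * k)⌉ : ℝ)) :
    |(x.1 : ℝ)| < (x.2 : ℝ) ^ α := by
  set c : ℝ := ((⌈(2 : ℝ) ^ (β * k)⌉ : ℤ) : ℝ) with hc
  set t : ℝ := |(x.1 : ℝ) - (y₁ : ℝ)| * (2 : ℝ) ^ (-(γ * k)) with htdef
  have hA3 : (0:ℝ) < α + 3 := by linarith
  have hβ0 : 0 < β := by rw [hβ]; positivity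
  have hγ0 : 0 < γ := by rw [hγ]; apply div_pos <;> linarith
  have hk0 : (0:ℝ) ≤ (k:ℝ) := Nat.cast_nonneg k
  have hbk : (1:ℝ) ≤ (2:ℝ) ^ (β * k) := by
    have := Real.rpow_le_rpow_of_exponent_le one_le_two
      (show (0:ℝ) ≤ β * k from mul_nonneg hβ0.le hk0)
    simpa using this
  have hc1 : (1:ℝ) ≤ c := hbk.trans (Int.le_ceil _)
  have hcpos : (0:ℝ) < c := by linarith
  have ht0 : 0 ≤ t := mul_nonneg (abs_nonneg _) (Real.rpow_nonneg (by norm_num) _)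
  have hx2 : c + t ≤ (x.2 : ℝ) := by linarith [hxW]
  have hx2pos : (0:ℝ) < (x.2 : ℝ) := by linarith
  have hexp : β * (α - 1) = 2 * γ := by
    rw [hβ, hγ]; field_simp; ring
  -- c^(α-1) ≥ 2^(γ k)
  have hcexp : (2:ℝ) ^ (γ * k) ≤ c ^ (α - 1) := by
    have h1' : ((2:ℝ) ^ (β * k)) ^ (α - 1) ≤ c ^ (α - 1) :=
      Real.rpow_le_rpow (by positivity) (Int.le_ceil _) (by linarith)
    have h2' : ((2:ℝ) ^ (β * k)) ^ (α - 1) = (2:ℝ) ^ (β * k * (α - 1)) := by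
      rw [← Real.rpow_mul (by norm_num)]
    have h3' : (2:ℝ) ^ (γ * k) ≤ (2:ℝ) ^ (β * k * (α - 1)) := by
      apply Real.rpow_le_rpow_of_exponent_le one_le_two
      have hγk : 0 ≤ γ * k := mul_nonneg hγ0.le hk0
      nlinarith [hexp]
    linarith [h2' ▸ h1']
  -- 2^(γ k) * t = |x₁ - y₁|
  have hcancel : (2:ℝ) ^ (γ * k) * t = |(x.1 : ℝ) - (y₁ : ℝ)| := by
    rw [htdef, ← mul_assoc, mul_comm ((2:ℝ) ^ (γ * k)), mul_assoc,
      ← Real.rpow_add (by norm_num : (0:ℝ) < 2)]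
    simp
  have hct : |(x.1 : ℝ) - (y₁ : ℝ)| ≤ c ^ (α - 1) * t := by
    calc |(x.1 : ℝ) - (y₁ : ℝ)| = (2:ℝ) ^ (γ * k) * t := hcancel.symm
      _ ≤ c ^ (α - 1) * t := mul_le_mul_of_nonneg_right hcexp ht0
  -- x₂^α ≥ c^(α-1) * (c + t)
  have hxpow : c ^ (α - 1) * (c + t) ≤ (x.2 : ℝ) ^ α := by
    have hmono : c ^ (α - 1) ≤ (x.2 : ℝ) ^ (α - 1) :=
      Real.rpow_le_rpow hcpos.le (by linarith) (by linarith)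
    have hmul : c ^ (α - 1) * (c + t) ≤ (x.2 : ℝ) ^ (α - 1) * (x.2 : ℝ) :=
      mul_le_mul hmono hx2 (by linarith) (Real.rpow_nonneg hx2pos.le _)
    have hrw : (x.2 : ℝ) ^ (α - 1) * (x.2 : ℝ) = (x.2 : ℝ) ^ α := by
      rw [← Real.rpow_add_one hx2pos.ne' (α - 1)]; ring_nf
    linarith [hrw ▸ hmul]
  have hsplit : c ^ (α - 1) * (c + t) = c ^ α + c ^ (α - 1) * t := by
    have : c ^ α = c ^ (α - 1) * c := by
      rw [← Real.rpow_add_one hcpos.ne' (α - 1)]; ring_nf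
    rw [this]; ring
  have htri : |(x.1 : ℝ)| ≤ |(x.1 : ℝ) - (y₁ : ℝ)| + |(y₁ : ℝ)| := by
    have := abs_sub_abs_le_abs_sub (x.1 : ℝ) (y₁ : ℝ)
    linarith
  have hca : (2:ℝ) ^ ((1 + γ) * k + 1) < c ^ α := h2
  linarith [hsplit ▸ hxpow]
end
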